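/- arXiv:1311.4262 — 3 statements merged into one kernel-verified Lean document; each statement's English description precedes it below -/
import Mathlib

section
/- Let s be a nonzero complex number, y a complex number, x = s + s^{-1}, and let A = [[s,1],[0,s^{-1}]] and B = [[s,0],[2-y,s^{-1}]] be 2×2 complex matrices. For a positive integer m, set W = (B·A^{-1})^m·(B·A)·(B^{-1}·A)^m. Then the trace of W equals x^2 - y - (y-2)(y+2-x^2)·S_m(y)·S_{m-1}(y). -/
open Real

/-- Auxiliary sequence for the Chebyshev-like polynomials on natural indices. -/
def Saux {R : Type*} [CommRing R] : ℕ → R → R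
  | 0, _ => 1
  | 1, z => z
  | (n + 2), z => z * Saux (n + 1) z - Saux n z

/-- The Chebyshev-like polynomials `S j` indexed by all integers `j`:
`S 0 z = 1`, `S 1 z = z`, and `S (j + 1) z = z * S j z - S (j - 1) z` for all `j : ℤ`
(so `S (-1) z = 0`, `S (-2) z = -1`, and in general `S (-j) z = -S (j - 2) z`). -/
def S {R : Type*} [CommRing R] (j : ℤ) (z : R) : R :=
  if 0 ≤ j then Saux j.toNat z
  else if j = -1 then 0
  else -Saux (-j - 2).toNat z

/-!
Both `B * A⁻¹` and `B⁻¹ * A` have trace `y` and determinant `1`, so by Cayley–Hamilton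
`P ^ m = S (m - 1) y • P - S (m - 2) y • 1` for each of them. Hence `trace W` is a quadratic form
in `S (m - 1) y` and `S (m - 2) y`, which collapses to the claimed value by the Cassini-type
identity `S (m - 2) y ^ 2 + S (m - 1) y ^ 2 - y * S (m - 2) y * S (m - 1) y = 1`.
-/

open Polynomial

theorem Saux_eq_eval_chebyshevS {R : Type*} [CommRing R] (z : R) :
    ∀ n : ℕ, Saux n z = (Chebyshev.S R n).eval z
  | 0 => by simp [Saux]
  | 1 => by simp [Saux]
  | n + 2 => by
    rw [Saux, Saux_eq_eval_chebyshevS z (n + 1), Saux_eq_eval_chebyshevS z n]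
    push_cast
    simp [Chebyshev.S_add_two]

theorem S_eq_eval_chebyshevS {R : Type*} [CommRing R] (j : ℤ) (z : R) :
    S j z = (Chebyshev.S R j).eval z := by
  unfold S
  split_ifs with hj hj₁
  · rw [Saux_eq_eval_chebyshevS, Int.toNat_of_nonneg hj]
  · simp [hj₁]
  · obtain ⟨n, rfl⟩ : ∃ n : ℕ, j = -n - 2 := ⟨(-j - 2).toNat, by omega⟩
    rw [show -(-(n : ℤ) - 2) - 2 = n by ring, Int.toNat_natCast, Saux_eq_eval_chebyshevS,
      Chebyshev.S_neg_sub_two, eval_neg]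

theorem pow_eq_eval_chebyshevS_smul_sub {R A : Type*} [CommRing R] [Ring A] [Algebra R A]
    {P : A} {t : R} (hP : P * P = t • P - 1) (n : ℕ) :
    P ^ n = (Chebyshev.S R (n - 1)).eval t • P - (Chebyshev.S R (n - 2)).eval t • 1 := by
  induction n with
  | zero => simp
  | succ n ih =>
    rw [pow_succ, ih, sub_mul, smul_mul_assoc, hP, smul_mul_assoc, one_mul, smul_sub, smul_smul,
      Nat.cast_succ, add_sub_cancel_right, Chebyshev.S_eq R n]
    simp only [show (n : ℤ) + 1 - 2 = n - 1 by ring, eval_sub, eval_mul, eval_X]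
    module

theorem Matrix.mul_self_fin_two {R : Type*} [CommRing R] (P : Matrix (Fin 2) (Fin 2) R) :
    P * P = P.trace • P - P.det • 1 := by
  rw [P.eta_fin_two]
  simp only [Matrix.mul_fin_two, Matrix.trace_fin_two_of, Matrix.det_fin_two_of,
    Matrix.one_fin_two, Matrix.smul_of]
  ext i j
  fin_cases i <;> fin_cases j <;> simp <;> ring

theorem Matrix.mul_self_eq_smul_sub_one_of_det_eq_one {R : Type*} [CommRing R]
    {P : Matrix (Fin 2) (Fin 2) R} {t : R} (htr : P.trace = t) (hdet : P.det = 1) :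
    P * P = t • P - 1 := by
  rw [P.mul_self_fin_two, htr, hdet, one_smul]

theorem Matrix.inv_fin_two_of_det_eq_one {R : Type*} [CommRing R] {a b c d : R}
    (h : a * d - b * c = 1) : !![a, b; c, d]⁻¹ = !![d, -b; -c, a] := by
  rw [Matrix.inv_def, Matrix.det_fin_two_of, h, Ring.inverse_one, one_smul,
    Matrix.adjugate_fin_two_of]

section

variable {K : Type*} [Field K] {s : K} (y : K)

theorem lower_mul_inv_upper (hs : s ≠ 0) :
    !![s, 0; 2 - y, s⁻¹] * !![s, 1; 0, s⁻¹]⁻¹ = !![1, -s; (2 - y) * s⁻¹, y - 1] := by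
  rw [Matrix.inv_fin_two_of_det_eq_one (by field_simp; ring), Matrix.mul_fin_two]
  simp [hs]
  ring

theorem inv_lower_mul_upper (hs : s ≠ 0) :
    !![s, 0; 2 - y, s⁻¹]⁻¹ * !![s, 1; 0, s⁻¹] = !![1, s⁻¹; (y - 2) * s, y - 1] := by
  rw [Matrix.inv_fin_two_of_det_eq_one (by field_simp; ring), Matrix.mul_fin_two]
  simp [hs]
  ring

theorem trace_smul_sub_mul_mul_smul_sub (hs : s ≠ 0) {a b : K}
    (hab : b ^ 2 + a ^ 2 - y * b * a = 1) :
    Matrix.trace ((a • !![1, -s; (2 - y) * s⁻¹, y - 1] - b • 1) *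
        (!![s, 0; 2 - y, s⁻¹] * !![s, 1; 0, s⁻¹]) * (a • !![1, s⁻¹; (y - 2) * s, y - 1] - b • 1)) =
      (s + s⁻¹) ^ 2 - y - (y - 2) * (y + 2 - (s + s⁻¹) ^ 2) * (y * a - b) * a := by
  simp only [Matrix.one_fin_two, Matrix.smul_of, Matrix.smul_cons, Matrix.smul_empty, smul_eq_mul,
    Matrix.of_sub_of, Matrix.sub_cons, Matrix.head_cons, Matrix.tail_cons, Matrix.empty_sub_empty,
    Matrix.mul_fin_two, Matrix.trace_fin_two_of]
  field_simp
  linear_combination (1 + 2 * s ^ 2 + s ^ 4 - s ^ 2 * y) * hab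

end

theorem stmt2_general (s y x : ℂ) (hs : s ≠ 0) (hx : x = s + s⁻¹) (m : ℕ)
    (A B W : Matrix (Fin 2) (Fin 2) ℂ)
    (hA : A = !![s, 1; 0, s⁻¹]) (hB : B = !![s, 0; 2 - y, s⁻¹])
    (hW : W = (B * A⁻¹) ^ m * (B * A) * (B⁻¹ * A) ^ m) :
    Matrix.trace W = x ^ 2 - y - (y - 2) * (y + 2 - x ^ 2) * S (m : ℤ) y * S ((m : ℤ) - 1) y := by
  subst hA hB hW hx
  have hM : !![1, -s; (2 - y) * s⁻¹, y - 1] * !![1, -s; (2 - y) * s⁻¹, y - 1] =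
      y • !![1, -s; (2 - y) * s⁻¹, y - 1] - 1 :=
    Matrix.mul_self_eq_smul_sub_one_of_det_eq_one (by simp) (by simp; field_simp; ring)
  have hN : !![1, s⁻¹; (y - 2) * s, y - 1] * !![1, s⁻¹; (y - 2) * s, y - 1] =
      y • !![1, s⁻¹; (y - 2) * s, y - 1] - 1 :=
    Matrix.mul_self_eq_smul_sub_one_of_det_eq_one (by simp) (by simp; field_simp; ring)
  have hcassini := congrArg (eval y) (Chebyshev.S_sq_add_S_sq ℂ (m - 2))
  rw [show (m : ℤ) - 2 + 1 = m - 1 by ring] at hcassini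
  simp only [eval_sub, eval_add, eval_pow, eval_mul, eval_X, eval_one] at hcassini
  rw [lower_mul_inv_upper y hs, inv_lower_mul_upper y hs, pow_eq_eval_chebyshevS_smul_sub hM,
    pow_eq_eval_chebyshevS_smul_sub hN, trace_smul_sub_mul_mul_smul_sub y hs hcassini,
    S_eq_eval_chebyshevS, S_eq_eval_chebyshevS, Chebyshev.S_eq ℂ m, eval_sub, eval_mul, eval_X]

theorem stmt2 (s y x : ℂ) (hs : s ≠ 0) (hx : x = s + s⁻¹) (m : ℕ) (hm : 0 < m)
    (A B W : Matrix (Fin 2) (Fin 2) ℂ)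
    (hA : A = !![s, 1; 0, s⁻¹]) (hB : B = !![s, 0; 2 - y, s⁻¹])
    (hW : W = (B * A⁻¹) ^ m * (B * A) * (B⁻¹ * A) ^ m) :
    Matrix.trace W = x ^ 2 - y - (y - 2) * (y + 2 - x ^ 2) * S (m : ℤ) y * S ((m : ℤ) - 1) y :=
  stmt2_general s y x hs hx m A B W hA hB hW
end

section
/- Let s be a nonzero complex number, y a complex number, x = s + s^{-1}, A = [[s,1],[0,s^{-1}]], B = [[s,0],[2-y,s^{-1}]], and for a positive integer m set W = (B·A^{-1})^m·(B^{-1}·A)^m, λ = tr(W), and α = 1 - (y+2-x^2)·S_{m-1}(y)·(S_{m-1}(y) - S_{m-2}(y)). Then for every integer n, W^n·A - B·W^n equals the 2×2 matrix [[0, φ],[(y-2)·φ, 0]], where φ = S_{n-1}(λ)·α - S_{n-2}(λ). -/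
/-!
Both `M = B A⁻¹` and `N = B⁻¹ A` have determinant `1` and trace `y`. By Cayley–Hamilton every
`X ∈ SL₂` satisfies `X ^ n = S_{n-1}(tr X) X - S_{n-2}(tr X)`, so `Mᵐ = p M - q` and
`Nᵐ = p N - q` with `p = S_{m-1}(y)`, `q = S_{m-2}(y)`. An entrywise computation, using
`p² + q² - y p q = 1` (that is, `det Mᵐ = 1`), gives `W A - B W = α (A - B)`. Expanding `Wⁿ` in
the same way turns this into `Wⁿ A - B Wⁿ = (S_{n-1}(λ) α - S_{n-2}(λ)) (A - B)`, and
`A - B = [[0, 1], [y - 2, 0]]`.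
-/

open Real

open Polynomial

section Chebyshev

variable {R : Type*} [CommRing R]

theorem Saux_eq_eval : ∀ (k : ℕ) (z : R), Saux k z = (Chebyshev.S R k).eval z
  | 0, _ => by simp [Saux]
  | 1, _ => by simp [Saux]
  | k + 2, z => by
    rw [Saux, Saux_eq_eval (k + 1), Saux_eq_eval k]
    push_cast
    simp [Chebyshev.S_add_two]

theorem S_eq_eval (j : ℤ) (z : R) : S j z = (Chebyshev.S R j).eval z := by
  unfold S
  split_ifs with hj hj'
  · rw [Saux_eq_eval, Int.toNat_of_nonneg hj]
  · simp [hj']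
  · rw [Saux_eq_eval, Int.toNat_of_nonneg (by omega), ← eval_neg, ← Chebyshev.S_neg_sub_two,
      neg_sub, sub_neg_eq_add, add_sub_cancel_left]

end Chebyshev

namespace Matrix

variable {R : Type*} [CommRing R]

theorem mul_self_eq_trace_smul_sub_det_smul (M : Matrix (Fin 2) (Fin 2) R) :
    M * M = M.trace • M - M.det • 1 := by
  ext i j
  fin_cases i <;> fin_cases j <;>
    simp [mul_apply, trace_fin_two, det_fin_two] <;> ring

theorem inv_fin_two_of_det_eq_one_s3 {a b c d : R} (h : !![a, b; c, d].det = 1) :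
    !![a, b; c, d]⁻¹ = !![d, -b; -c, a] := by
  rw [inv_def, h, Ring.inverse_one, one_smul, adjugate_fin_two_of]

theorem zpow_fin_two_of_det_eq_one {M : Matrix (Fin 2) (Fin 2) R} (hM : M.det = 1) (n : ℤ) :
    M ^ n =
      (Chebyshev.S R (n - 1)).eval M.trace • M - (Chebyshev.S R (n - 2)).eval M.trace • 1 := by
  have hu : IsUnit M.det := hM ▸ isUnit_one
  have hsq : M * M = M.trace • M - 1 := by rw [mul_self_eq_trace_smul_sub_det_smul, hM, one_smul]
  have hrec (j : ℤ) : (Chebyshev.S R j).eval M.trace =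
      M.trace * (Chebyshev.S R (j - 1)).eval M.trace - (Chebyshev.S R (j - 2)).eval M.trace := by
    rw [Chebyshev.S_eq, eval_sub, eval_mul, eval_X]
  induction n using Int.induction_on with
  | zero => simp
  | succ k ih =>
    rw [zpow_add_one hu, ih, show (k : ℤ) + 1 - 1 = k by ring,
      show (k : ℤ) + 1 - 2 = k - 1 by ring, hrec k]
    simp only [sub_mul, smul_mul_assoc, hsq, one_mul]
    module
  | pred k ih =>
    have hinv : M⁻¹ = M.trace • 1 - M := by
      apply inv_eq_right_inv
      rw [mul_sub, mul_smul_comm, mul_one, hsq, sub_sub_cancel]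
    rw [zpow_sub_one hu, ih, hinv, hrec (-k - 1), show -(k : ℤ) - 1 - 1 = -k - 2 by ring]
    simp only [sub_mul, mul_sub, smul_mul_assoc, mul_smul_comm, mul_one, one_mul, hsq]
    module

theorem zpow_mul_sub_mul_zpow {A B W : Matrix (Fin 2) (Fin 2) R} (hW : W.det = 1) {α : R}
    (h : W * A - B * W = α • (A - B)) (n : ℤ) :
    W ^ n * A - B * W ^ n =
      ((Chebyshev.S R (n - 1)).eval W.trace * α - (Chebyshev.S R (n - 2)).eval W.trace) •
        (A - B) := by
  rw [zpow_fin_two_of_det_eq_one hW, sub_mul, mul_sub, smul_mul_assoc, smul_mul_assoc, one_mul,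
    mul_smul_comm, mul_smul_comm, mul_one]
  linear_combination (norm := module) (Chebyshev.S R (n - 1)).eval W.trace • h

end Matrix

section

variable {K : Type*} [Field K] {s : K} (hs : s ≠ 0) (y : K)
include hs

theorem B_mul_A_inv :
    !![s, 0; 2 - y, s⁻¹] * !![s, 1; 0, s⁻¹]⁻¹ = !![1, -s; (2 - y) * s⁻¹, y - 1] := by
  rw [Matrix.inv_fin_two_of_det_eq_one_s3 (by simp [hs]), Matrix.mul_fin_two]
  simp [hs]
  ring

theorem B_inv_mul_A :
    !![s, 0; 2 - y, s⁻¹]⁻¹ * !![s, 1; 0, s⁻¹] = !![1, s⁻¹; (y - 2) * s, y - 1] := by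
  rw [Matrix.inv_fin_two_of_det_eq_one_s3 (by simp [hs]), Matrix.mul_fin_two]
  simp [hs]
  ring

theorem mul_sub_mul_eq_smul_sub {A B W : Matrix (Fin 2) (Fin 2) K} (hA : A = !![s, 1; 0, s⁻¹])
    (hB : B = !![s, 0; 2 - y, s⁻¹]) {p q : K} (hpq : q ^ 2 + p ^ 2 - y * q * p = 1)
    (hW : W = (p • (B * A⁻¹) - q • 1) * (p • (B⁻¹ * A) - q • 1)) :
    W * A - B * W = (1 - (y + 2 - (s + s⁻¹) ^ 2) * p * (p - q)) • (A - B) := by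
  have hst : s * s⁻¹ = 1 := mul_inv_cancel₀ hs
  subst hA hB hW
  rw [B_mul_A_inv hs, B_inv_mul_A hs]
  ext i j
  fin_cases i <;> fin_cases j <;>
    simp [Matrix.mul_apply, Fin.sum_univ_two, Matrix.one_apply, Matrix.vecMul, dotProduct]
  · ring
  · linear_combination (4 * p * q - 2 * p ^ 2 - y * p ^ 2) * hst + hpq
  · linear_combination (-8 * p * q + 4 * p ^ 2 + 4 * y * p * q - y ^ 2 * p ^ 2) * hst
      + (y - 2) * hpq
  · ring

end

theorem stmt3_general (s y x : ℂ) (hs : s ≠ 0) (hx : x = s + s⁻¹) (m : ℕ)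
    (A B W : Matrix (Fin 2) (Fin 2) ℂ)
    (hA : A = !![s, 1; 0, s⁻¹]) (hB : B = !![s, 0; 2 - y, s⁻¹])
    (hW : W = (B * A⁻¹) ^ m * (B⁻¹ * A) ^ m)
    (lam alp : ℂ) (hlam : lam = Matrix.trace W)
    (halp : alp = 1 - (y + 2 - x ^ 2) * S ((m : ℤ) - 1) y * (S ((m : ℤ) - 1) y - S ((m : ℤ) - 2) y))
    (n : ℤ) :
    W ^ n * A - B * W ^ n =
      !![0, S (n - 1) lam * alp - S (n - 2) lam;
         (y - 2) * (S (n - 1) lam * alp - S (n - 2) lam), 0] := by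
  set p := S ((m : ℤ) - 1) y
  set q := S ((m : ℤ) - 2) y
  have hpow {M : Matrix (Fin 2) (Fin 2) ℂ} (hdet : M.det = 1) (htr : M.trace = y) :
      M ^ m = p • M - q • 1 := by
    simpa [p, q, S_eq_eval, htr] using Matrix.zpow_fin_two_of_det_eq_one hdet m
  have hpq : q ^ 2 + p ^ 2 - y * q * p = 1 := by
    simpa [p, q, S_eq_eval, show (m : ℤ) - 2 + 1 = m - 1 by ring] using
      congrArg (eval y) (Chebyshev.S_sq_add_S_sq ℂ (m - 2))
  have hdetA : A.det = 1 := by simp [hA, hs]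
  have hdetB : B.det = 1 := by simp [hB, hs]
  have htrM : (B * A⁻¹).trace = y := by simp [hA, hB, B_mul_A_inv hs]
  have htrN : (B⁻¹ * A).trace = y := by simp [hA, hB, B_inv_mul_A hs]
  have hdetM : (B * A⁻¹).det = 1 := by simp [hdetA, hdetB]
  have hdetN : (B⁻¹ * A).det = 1 := by simp [hdetA, hdetB]
  have hdetW : W.det = 1 := by simp [hW, hdetM, hdetN]
  have hWA : W * A - B * W = alp • (A - B) := by
    rw [halp, hx]
    exact mul_sub_mul_eq_smul_sub hs y hA hB hpq (by rw [hW, hpow hdetM htrM, hpow hdetN htrN])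
  rw [Matrix.zpow_mul_sub_mul_zpow hdetW hWA n, ← hlam, hA, hB, S_eq_eval, S_eq_eval]
  ext i j
  fin_cases i <;> fin_cases j <;> simp [mul_comm]

theorem stmt3 (s y x : ℂ) (hs : s ≠ 0) (hx : x = s + s⁻¹) (m : ℕ) (hm : 0 < m)
    (A B W : Matrix (Fin 2) (Fin 2) ℂ)
    (hA : A = !![s, 1; 0, s⁻¹]) (hB : B = !![s, 0; 2 - y, s⁻¹])
    (hW : W = (B * A⁻¹) ^ m * (B⁻¹ * A) ^ m)
    (lam alp : ℂ) (hlam : lam = Matrix.trace W)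
    (halp : alp = 1 - (y + 2 - x ^ 2) * S ((m : ℤ) - 1) y * (S ((m : ℤ) - 1) y - S ((m : ℤ) - 2) y))
    (n : ℤ) :
    W ^ n * A - B * W ^ n =
      !![0, S (n - 1) lam * alp - S (n - 2) lam;
         (y - 2) * (S (n - 1) lam * alp - S (n - 2) lam), 0] :=
  stmt3_general s y x hs hx m A B W hA hB hW lam alp hlam halp n
end

section
/- Let m be a nonnegative integer and let x, y be complex numbers. Define λ = x^2 - y - (y-2)(y+2-x^2)·S_m(y)·S_{m-1}(y). Then 2 - λ = (y+2-x^2)·(S_m(y) - S_{m-1}(y))^2. -/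
open Real

theorem Saux_succ_sq_sub_mul_add_sq {R : Type*} [CommRing R] (k : ℕ) (z : R) :
    Saux (k + 1) z ^ 2 - z * Saux (k + 1) z * Saux k z + Saux k z ^ 2 = 1 := by
  induction k with
  | zero => simp only [Saux]; ring
  | succ n ih =>
    rw [show Saux (n + 2) z = z * Saux (n + 1) z - Saux n z from rfl]
    linear_combination ih

theorem S_natCast {R : Type*} [CommRing R] (n : ℕ) (z : R) : S (n : ℤ) z = Saux n z := by
  simp [S]

theorem S_sq_sub_mul_add_sq {R : Type*} [CommRing R] (m : ℕ) (z : R) :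
    S (m : ℤ) z ^ 2 - z * S (m : ℤ) z * S ((m : ℤ) - 1) z + S ((m : ℤ) - 1) z ^ 2 = 1 := by
  cases m with
  | zero => simp [S, Saux]
  | succ k =>
    rw [Nat.cast_succ, add_sub_cancel_right, ← Nat.cast_succ, S_natCast, S_natCast]
    exact Saux_succ_sq_sub_mul_add_sq k z

theorem stmt11 (m : ℕ) (x y lam : ℂ)
    (hlam : lam = x ^ 2 - y - (y - 2) * (y + 2 - x ^ 2) * S (m : ℤ) y * S ((m : ℤ) - 1) y) :
    2 - lam = (y + 2 - x ^ 2) * (S (m : ℤ) y - S ((m : ℤ) - 1) y) ^ 2 := by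
  subst hlam
  linear_combination (-(y + 2 - x ^ 2)) * S_sq_sub_mul_add_sq m y
end
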